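/- Gauss' identity: the generating function of triangular numbers satisfies ∑_{n≥0} q^{n(n+1)/2} = ∏_{n≥1} (1-q^{2n})^2 / (1-q^n), as an identity of formal power series in q. -/

import Mathlib

/-!
Cauchy's q-binomial theorem `∏_{i=1}^{2n} (y + q^i) = ∑_m [2n, m]_q q^{m(m+1)/2} y^{2n-m}` at
`y = q^n`, divided by `q^{n(n+1)/2 + n²}`, is the finite Jacobi triple product
`∑_{j=-n}^{n} [2n, n+j]_q q^{j(j+1)/2} = ∏_{k=0}^{n-1} (1 + q^k) · ∏_{k=1}^{n} (1 + q^k)`.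
Since `[2n, m]_q (q;q)_m (q;q)_{2n-m} = (q;q)_{2n}` and `(q;q)_a ≡ (q;q)_b` modulo
`q^{min a b + 1}`, we get `[2n, n+j]_q ≡ [2n, n]_q (mod q^{n-|j|+1})`, which the factor
`q^{j(j+1)/2}` lifts to a congruence modulo `q^n`. So modulo `q^n` the left side is
`[2n, n]_q · 2Δ(q)` and the right side is `2 (-q;q)_n²`. Multiplying by `(q;q)_n²` and using
`[2n, n]_q (q;q)_n² = (q;q)_{2n} ≡ (q;q)_n` and `(q;q)_n (-q;q)_n = (q²;q²)_n` gives
`(q;q)_n Δ(q) ≡ (q²;q²)_n² (mod q^n)`, which is the identity up to degree `n - 1`.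
-/

open PowerSeries Finset

/-- The generating function `Δ(q) = ∑_{n≥0} q^{n(n+1)/2}` of triangular numbers. -/
noncomputable def triangularGF : PowerSeries ℚ :=
  PowerSeries.mk fun N => (((Finset.range (N + 1)).filter fun n => n * (n + 1) = 2 * N).card : ℚ)

def qChoose {R : Type*} [CommRing R] (x : R) : ℕ → ℕ → R
  | _, 0 => 1
  | 0, _ + 1 => 0
  | K + 1, m + 1 => qChoose x K (m + 1) + x ^ (K - m) * qChoose x K m

section qChoose

variable {R S : Type*} [CommRing R] [CommRing S] (x : R)

@[simp]
lemma qChoose_zero_right (K : ℕ) : qChoose x K 0 = 1 := by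
  cases K <;> rfl

lemma qChoose_succ_succ (K m : ℕ) :
    qChoose x (K + 1) (m + 1) = qChoose x K (m + 1) + x ^ (K - m) * qChoose x K m := rfl

lemma qChoose_of_lt {K m : ℕ} (h : K < m) : qChoose x K m = 0 := by
  induction K generalizing m with
  | zero => obtain ⟨m, rfl⟩ := Nat.exists_eq_succ_of_ne_zero (by omega : m ≠ 0); rfl
  | succ K ih =>
    obtain ⟨m, rfl⟩ := Nat.exists_eq_succ_of_ne_zero (by omega : m ≠ 0)
    rw [qChoose_succ_succ, ih (by omega), ih (by omega), mul_zero, add_zero]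

lemma map_qChoose {F : Type*} [FunLike F R S] [RingHomClass F R S] (f : F) (K m : ℕ) :
    f (qChoose x K m) = qChoose (f x) K m := by
  induction K generalizing m with
  | zero => cases m <;> simp [qChoose]
  | succ K ih =>
    cases m with
    | zero => simp
    | succ m => simp [qChoose_succ_succ, ih]

end qChoose

def triangle (z : ℤ) : ℕ := (z * (z + 1) / 2).toNat

lemma two_mul_triangle (z : ℤ) : 2 * (triangle z : ℤ) = z * (z + 1) := by
  have hnonneg : 0 ≤ z * (z + 1) := by rcases le_or_gt 0 z with h | h <;> nlinarith
  obtain ⟨k, hk⟩ := Int.even_mul_succ_self z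
  rw [triangle, hk]
  omega

@[simp]
lemma triangle_zero : triangle 0 = 0 := rfl

lemma triangle_natCast_succ (n : ℕ) : triangle (n + 1 : ℕ) = triangle n + (n + 1) := by
  have h₁ := two_mul_triangle ((n + 1 : ℕ) : ℤ)
  have h₂ := two_mul_triangle n
  push_cast at h₁
  linarith

lemma triangle_neg_sub_one (z : ℤ) : triangle (-z - 1) = triangle z := by
  have h₁ := two_mul_triangle (-z - 1)
  have h₂ := two_mul_triangle z
  linarith

lemma le_triangle (z : ℤ) : z ≤ triangle z := by
  nlinarith [two_mul_triangle z]

lemma neg_sub_one_le_triangle (z : ℤ) : -z - 1 ≤ triangle z := by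
  simpa [triangle_neg_sub_one] using le_triangle (-z - 1)

section qBinomial

variable {R : Type*} [CommRing R] (x y : R)

theorem prod_add_pow_eq_sum_qChoose (K : ℕ) :
    ∏ i ∈ range K, (y + x ^ (i + 1)) =
      ∑ m ∈ range (K + 1), qChoose x K m * x ^ triangle m * y ^ (K - m) := by
  induction K with
  | zero => simp
  | succ K ih =>
    set P := ∑ m ∈ range (K + 1), qChoose x K m * x ^ triangle m * y ^ (K - m)
    have h_left :
        ∑ m ∈ range (K + 1), qChoose x K (m + 1) * x ^ triangle ↑(m + 1) * y ^ (K - m) +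
          y ^ (K + 1) = P * y := calc
      _ = ∑ m ∈ range (K + 2), qChoose x K m * x ^ triangle m * y ^ (K + 1 - m) := by
        rw [sum_range_succ' _ (K + 1)]
        simp
      _ = ∑ m ∈ range (K + 1), qChoose x K m * x ^ triangle m * y ^ (K + 1 - m) := by
        rw [sum_range_succ, qChoose_of_lt x (K.lt_succ_self), zero_mul, zero_mul, add_zero]
      _ = P * y := by
        rw [sum_mul]
        refine sum_congr rfl fun m hm => ?_
        rw [Nat.sub_add_comm (Nat.le_of_lt_succ (mem_range.mp hm)), pow_succ]
        ring
    have h_right : ∑ m ∈ range (K + 1),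
        x ^ (K - m) * qChoose x K m * x ^ triangle ↑(m + 1) * y ^ (K - m) = P * x ^ (K + 1) := by
      rw [sum_mul]
      refine sum_congr rfl fun m hm => ?_
      have hexp : K - m + triangle ↑(m + 1) = triangle m + (K + 1) := by
        rw [triangle_natCast_succ]; have := mem_range.mp hm; omega
      rw [mul_comm (x ^ (K - m)), mul_assoc _ (x ^ (K - m)), ← pow_add, hexp, pow_add]
      ring
    rw [prod_range_succ, ih, sum_range_succ' _ (K + 1)]
    simp only [qChoose_succ_succ, add_mul, sum_add_distrib, Nat.add_sub_add_right,
      qChoose_zero_right, Nat.cast_zero, triangle_zero, pow_zero, Nat.sub_zero, one_mul]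
    rw [mul_add, ← h_left, ← h_right]
    ring

end qBinomial

/-- The q-Pochhammer symbol `(x; x)_n`. -/
def qPochhammer {R : Type*} [CommRing R] (x : R) (n : ℕ) : R :=
  ∏ i ∈ range n, (1 - x ^ (i + 1))

section qPochhammer

variable {R : Type*} [CommRing R] (x : R)

lemma qPochhammer_succ (n : ℕ) : qPochhammer x (n + 1) = qPochhammer x n * (1 - x ^ (n + 1)) :=
  prod_range_succ _ n

theorem qChoose_mul_qPochhammer_mul_qPochhammer {K m : ℕ} (h : m ≤ K) :
    qChoose x K m * qPochhammer x m * qPochhammer x (K - m) = qPochhammer x K := by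
  induction K generalizing m with
  | zero =>
    obtain rfl : m = 0 := by omega
    simp [qPochhammer]
  | succ K ih =>
    cases m with
    | zero => simp [qPochhammer]
    | succ m =>
      have h_shift : qChoose x K (m + 1) * qPochhammer x (m + 1) * qPochhammer x (K - m) =
          qPochhammer x K * (1 - x ^ (K - m)) := by
        rcases Nat.lt_or_ge m K with hm | hm
        · rw [← ih hm, show K - m = K - (m + 1) + 1 by omega, qPochhammer_succ x (K - (m + 1))]
          ring
        · obtain rfl : m = K := by omega
          simp [qChoose_of_lt]
      have hx : x ^ (K - m) * x ^ (m + 1) = x ^ (K + 1) := by rw [← pow_add]; congr 1; omega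
      rw [qChoose_succ_succ, Nat.add_sub_add_right, qPochhammer_succ x K]
      rw [qPochhammer_succ x m] at h_shift ⊢
      linear_combination h_shift + x ^ (K - m) * (1 - x ^ (m + 1)) * ih (by omega : m ≤ K)
        - qPochhammer x K * hx

lemma qChoose_two_mul_mul_qPochhammer_sq (n : ℕ) :
    qChoose x (2 * n) n * qPochhammer x n ^ 2 = qPochhammer x (2 * n) := by
  rw [← qChoose_mul_qPochhammer_mul_qPochhammer x (by omega : n ≤ 2 * n),
    show 2 * n - n = n by omega]
  ring

end qPochhammer

section JacobiTripleProduct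

variable {R : Type*} [CommRing R]

lemma prod_pow_succ_eq_pow_triangle (x : R) (n : ℕ) :
    ∏ i ∈ range n, x ^ (i + 1) = x ^ triangle n := by
  induction n with
  | zero => simp
  | succ n ih => rw [prod_range_succ, ih, ← pow_add, triangle_natCast_succ]

lemma prod_pow_add_pow_succ (x : R) (n : ℕ) :
    ∏ i ∈ range n, (x ^ n + x ^ (i + 1)) = x ^ triangle n * ∏ i ∈ range n, (1 + x ^ i) := by
  rw [← prod_pow_succ_eq_pow_triangle, ← prod_range_reflect (fun i => 1 + x ^ i) n,
    ← prod_mul_distrib]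
  refine prod_congr rfl fun i hi => ?_
  have hi := mem_range.mp hi
  rw [mul_add, mul_one, ← pow_add, show i + 1 + (n - 1 - i) = n by omega, add_comm]

lemma prod_pow_add_pow_add_succ (x : R) (n : ℕ) :
    ∏ i ∈ range n, (x ^ n + x ^ (n + i + 1)) =
      x ^ (n * n) * ∏ i ∈ range n, (1 + x ^ (i + 1)) := by
  calc ∏ i ∈ range n, (x ^ n + x ^ (n + i + 1))
    _ = ∏ i ∈ range n, x ^ n * (1 + x ^ (i + 1)) :=
        prod_congr rfl fun i _ => by rw [add_assoc, pow_add]; ring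
    _ = x ^ (n * n) * ∏ i ∈ range n, (1 + x ^ (i + 1)) := by
        rw [prod_mul_distrib, prod_const, card_range, ← pow_mul]

lemma triangle_add_mul_add_triangle_sub {m n : ℕ} (h : m ≤ 2 * n) :
    triangle n + n * n + triangle ((m : ℤ) - n) = triangle m + n * (2 * n - m) := by
  have hm := two_mul_triangle m
  have hn := two_mul_triangle n
  have hmn := two_mul_triangle ((m : ℤ) - n)
  zify [h]
  linarith

theorem sum_qChoose_mul_pow_triangle_of_isRegular {x : R} (hx : IsRegular x) (n : ℕ) :
    ∑ j ∈ range (2 * n + 1), qChoose x (2 * n) j * x ^ triangle ((j : ℤ) - n) =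
      (∏ i ∈ range n, (1 + x ^ i)) * ∏ i ∈ range n, (1 + x ^ (i + 1)) := by
  -- Cauchy's identity at `y = x ^ n` is this identity multiplied by `x ^ (triangle n + n * n)`.
  apply (hx.pow (triangle n + n * n)).left
  calc x ^ (triangle n + n * n) *
        ∑ j ∈ range (2 * n + 1), qChoose x (2 * n) j * x ^ triangle ((j : ℤ) - n)
    _ = ∑ j ∈ range (2 * n + 1),
          qChoose x (2 * n) j * x ^ triangle j * (x ^ n) ^ (2 * n - j) := by
        rw [mul_sum]
        refine sum_congr rfl fun j hj => ?_
        rw [← pow_mul, mul_left_comm, ← pow_add,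
          triangle_add_mul_add_triangle_sub (Nat.le_of_lt_succ (mem_range.mp hj)), pow_add,
          mul_assoc]
    _ = ∏ i ∈ range (2 * n), (x ^ n + x ^ (i + 1)) := (prod_add_pow_eq_sum_qChoose x _ _).symm
    _ = x ^ (triangle n + n * n) *
          ((∏ i ∈ range n, (1 + x ^ i)) * ∏ i ∈ range n, (1 + x ^ (i + 1))) := by
        rw [two_mul, prod_range_add, prod_pow_add_pow_succ, prod_pow_add_pow_add_succ, pow_add]
        ring

theorem sum_qChoose_mul_pow_triangle (x : R) (n : ℕ) :
    ∑ j ∈ range (2 * n + 1), qChoose x (2 * n) j * x ^ triangle ((j : ℤ) - n) =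
      (∏ i ∈ range n, (1 + x ^ i)) * ∏ i ∈ range n, (1 + x ^ (i + 1)) := by
  have hX : IsRegular (Polynomial.X : Polynomial ℤ) := IsRegular.of_ne_zero Polynomial.X_ne_zero
  simpa [map_qChoose] using
    congrArg (Polynomial.aeval x) (sum_qChoose_mul_pow_triangle_of_isRegular hX n)

end JacobiTripleProduct

section Congruence

variable {R : Type*} [CommRing R] {x : R}

lemma SModEq.span_pow_of_le {a b : R} {d e : ℕ} (hde : d ≤ e)
    (h : a ≡ b [SMOD Ideal.span {x ^ e}]) : a ≡ b [SMOD Ideal.span {x ^ d}] :=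
  h.mono (Ideal.span_singleton_le_span_singleton.mpr (pow_dvd_pow x hde))

lemma pow_smodEq_zero {d k : ℕ} (h : d ≤ k) : x ^ k ≡ 0 [SMOD Ideal.span {x ^ d}] :=
  SModEq.zero.mpr (Ideal.mem_span_singleton.mpr (pow_dvd_pow x h))

lemma SModEq.mul_pow_span_pow {a b : R} {d : ℕ} (h : a ≡ b [SMOD Ideal.span {x ^ d}])
    (e : ℕ) : a * x ^ e ≡ b * x ^ e [SMOD Ideal.span {x ^ (d + e)}] := by
  rw [SModEq.sub_mem, Ideal.mem_span_singleton] at h ⊢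
  rw [← sub_mul, pow_add]
  exact mul_dvd_mul_right h _

lemma SModEq.cancel_left_of_isUnit {I : Ideal R} {u a b : R} (hu : IsUnit u)
    (h : u * a ≡ u * b [SMOD I]) : a ≡ b [SMOD I] := by
  obtain ⟨u, rfl⟩ := hu
  simpa using (SModEq.refl (↑u⁻¹ : R)).mul h

variable (x)

lemma qPochhammer_smodEq {a b : ℕ} (h : a ≤ b) :
    qPochhammer x b ≡ qPochhammer x a [SMOD Ideal.span {x ^ (a + 1)}] := by
  rw [qPochhammer, ← prod_range_mul_prod_Ico _ h]
  calc (∏ i ∈ range a, (1 - x ^ (i + 1))) * ∏ i ∈ Ico a b, (1 - x ^ (i + 1))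
      ≡ (∏ i ∈ range a, (1 - x ^ (i + 1))) * ∏ i ∈ Ico a b, (1 - 0)
        [SMOD Ideal.span {x ^ (a + 1)}] := by
        gcongr with i hi
        exact pow_smodEq_zero (by have := (mem_Ico.mp hi).1; omega)
    _ = qPochhammer x a := by simp [qPochhammer]

lemma prod_one_add_pow_smodEq (n : ℕ) :
    ∏ i ∈ range n, (1 + x ^ i) ≡ 2 * ∏ i ∈ range n, (1 + x ^ (i + 1))
      [SMOD Ideal.span {x ^ n}] := by
  cases n with
  | zero => simp [Ideal.span_singleton_one, SModEq.top]
  | succ n =>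
    rw [prod_range_succ', prod_range_succ _ n]
    calc (∏ i ∈ range n, (1 + x ^ (i + 1))) * (1 + x ^ 0)
        = 2 * ((∏ i ∈ range n, (1 + x ^ (i + 1))) * (1 + 0)) := by ring
      _ ≡ 2 * ((∏ i ∈ range n, (1 + x ^ (i + 1))) * (1 + x ^ (n + 1)))
          [SMOD Ideal.span {x ^ (n + 1)}] := by
        gcongr
        exact (pow_smodEq_zero le_rfl).symm

lemma qPochhammer_mul_prod_one_add_pow (n : ℕ) :
    qPochhammer x n * ∏ i ∈ range n, (1 + x ^ (i + 1)) = qPochhammer (x ^ 2) n := by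
  rw [qPochhammer, qPochhammer, ← prod_mul_distrib]
  refine prod_congr rfl fun i _ => ?_
  ring

lemma sum_pow_triangle_sub (n : ℕ) :
    ∑ j ∈ range (2 * n + 1), x ^ triangle ((j : ℤ) - n) =
      ∑ r ∈ range n, x ^ triangle r + ∑ r ∈ range (n + 1), x ^ triangle r := by
  rw [show 2 * n + 1 = n + (n + 1) by ring, sum_range_add, ← sum_range_reflect _ n]
  congr 1
  · refine sum_congr rfl fun j hj => ?_
    have hj := mem_range.mp hj
    rw [show ((n - 1 - j : ℕ) : ℤ) - n = -j - 1 by omega, triangle_neg_sub_one]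
  · refine sum_congr rfl fun r _ => ?_
    push_cast
    rw [add_sub_cancel_left]

end Congruence

section PowerSeries

variable {R : Type*} [CommRing R]

lemma smodEq_span_X_pow_iff {f g : R⟦X⟧} {n : ℕ} :
    f ≡ g [SMOD Ideal.span {X ^ n}] ↔ ∀ k < n, coeff k f = coeff k g := by
  simp_rw [SModEq.sub_mem, Ideal.mem_span_singleton, X_pow_dvd_iff, map_sub, sub_eq_zero]

lemma isUnit_qPochhammer_X (n : ℕ) : IsUnit (qPochhammer (X : R⟦X⟧) n) := by
  simp [isUnit_iff_constantCoeff, qPochhammer]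

theorem qChoose_X_smodEq_qChoose_X_central {n j : ℕ} (hj : j ≤ 2 * n) :
    qChoose (X : R⟦X⟧) (2 * n) j ≡ qChoose X (2 * n) n
      [SMOD Ideal.span {X ^ (min j (2 * n - j) + 1)}] := by
  set m := min j (2 * n - j)
  have hA : ∀ a, m ≤ a → qPochhammer (X : R⟦X⟧) a ≡ qPochhammer X m
      [SMOD Ideal.span {X ^ (m + 1)}] := fun a ha => qPochhammer_smodEq X ha
  refine SModEq.cancel_left_of_isUnit ((isUnit_qPochhammer_X n).pow 2) ?_
  calc qPochhammer X n ^ 2 * qChoose (X : R⟦X⟧) (2 * n) j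
    _ ≡ qPochhammer X j * qPochhammer X (2 * n - j) * qChoose X (2 * n) j
        [SMOD Ideal.span {X ^ (m + 1)}] := by
        refine SModEq.mul ?_ SModEq.rfl
        rw [sq]
        exact ((hA n (by omega)).mul (hA n (by omega))).trans
          ((hA j (by omega)).mul (hA (2 * n - j) (by omega))).symm
    _ = qPochhammer X (2 * n) := by
        rw [← qChoose_mul_qPochhammer_mul_qPochhammer X hj]
        ring
    _ = qPochhammer X n ^ 2 * qChoose X (2 * n) n := by
        rw [← qChoose_two_mul_mul_qPochhammer_sq, mul_comm]

lemma qChoose_X_central_mul_X_pow_triangle_smodEq {n j : ℕ} (hj : j ≤ 2 * n) :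
    qChoose (X : R⟦X⟧) (2 * n) n * X ^ triangle ((j : ℤ) - n) ≡
      qChoose X (2 * n) j * X ^ triangle ((j : ℤ) - n) [SMOD Ideal.span {X ^ n}] := by
  have h₁ := le_triangle ((j : ℤ) - n)
  have h₂ := neg_sub_one_le_triangle ((j : ℤ) - n)
  have hc := (qChoose_X_smodEq_qChoose_X_central (R := R) hj).symm
  exact (hc.mul_pow_span_pow (triangle ((j : ℤ) - n))).span_pow_of_le (by omega)

end PowerSeries

lemma triangularGF_smodEq_sum {n k : ℕ} (h : n ≤ k) :
    triangularGF ≡ ∑ r ∈ range k, (X : ℚ⟦X⟧) ^ triangle r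
      [SMOD Ideal.span {X ^ n}] := by
  rw [smodEq_span_X_pow_iff]
  intro i hi
  simp_rw [triangularGF, coeff_mk, map_sum, coeff_X_pow, sum_boole]
  congr 2
  ext r
  have htwo : 2 * triangle r = r * (r + 1) := by exact_mod_cast two_mul_triangle r
  have hle : r ≤ triangle r := by exact_mod_cast le_triangle r
  simp only [mem_filter, mem_range]
  constructor
  · rintro ⟨-, hr⟩
    omega
  · rintro ⟨-, rfl⟩
    omega

lemma sum_X_pow_triangle_sub_smodEq (n : ℕ) :
    ∑ j ∈ range (2 * n + 1), (X : ℚ⟦X⟧) ^ triangle ((j : ℤ) - n) ≡ 2 * triangularGF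
      [SMOD Ideal.span {X ^ n}] := by
  rw [sum_pow_triangle_sub, two_mul]
  exact ((triangularGF_smodEq_sum le_rfl).add (triangularGF_smodEq_sum n.le_succ)).symm

theorem qChoose_X_central_mul_triangularGF_smodEq (n : ℕ) :
    qChoose X (2 * n) n * triangularGF ≡ (∏ i ∈ range n, (1 + X ^ (i + 1))) ^ 2
      [SMOD Ideal.span {(X : ℚ⟦X⟧) ^ n}] := by
  set P := ∏ i ∈ range n, (1 + (X : ℚ⟦X⟧) ^ (i + 1))
  have htwo : IsUnit (2 : ℚ⟦X⟧) := by
    rw [isUnit_iff_constantCoeff, map_ofNat]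
    norm_num
  refine SModEq.cancel_left_of_isUnit htwo ?_
  calc 2 * (qChoose X (2 * n) n * triangularGF)
    _ = qChoose X (2 * n) n * (2 * triangularGF) := by ring
    _ ≡ qChoose X (2 * n) n * ∑ j ∈ range (2 * n + 1), X ^ triangle ((j : ℤ) - n)
        [SMOD Ideal.span {X ^ n}] := SModEq.rfl.mul (sum_X_pow_triangle_sub_smodEq n).symm
    _ = ∑ j ∈ range (2 * n + 1), qChoose X (2 * n) n * X ^ triangle ((j : ℤ) - n) :=
        mul_sum ..
    _ ≡ ∑ j ∈ range (2 * n + 1), qChoose X (2 * n) j * X ^ triangle ((j : ℤ) - n)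
        [SMOD Ideal.span {X ^ n}] := SModEq.sum fun j hj =>
          qChoose_X_central_mul_X_pow_triangle_smodEq (Nat.le_of_lt_succ (mem_range.mp hj))
    _ = (∏ i ∈ range n, (1 + X ^ i)) * P := sum_qChoose_mul_pow_triangle X n
    _ ≡ 2 * P * P [SMOD Ideal.span {X ^ n}] := (prod_one_add_pow_smodEq X n).mul SModEq.rfl
    _ = 2 * P ^ 2 := by ring

theorem qPochhammer_X_mul_triangularGF_smodEq (n : ℕ) :
    qPochhammer X n * triangularGF ≡ qPochhammer (X ^ 2) n ^ 2
      [SMOD Ideal.span {(X : ℚ⟦X⟧) ^ n}] := by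
  calc qPochhammer X n * triangularGF
    _ ≡ qPochhammer X (2 * n) * triangularGF [SMOD Ideal.span {(X : ℚ⟦X⟧) ^ n}] := by
        refine SModEq.mul ?_ SModEq.rfl
        exact ((qPochhammer_smodEq X (by omega : n ≤ 2 * n)).span_pow_of_le n.le_succ).symm
    _ = qPochhammer X n ^ 2 * (qChoose X (2 * n) n * triangularGF) := by
        rw [← qChoose_two_mul_mul_qPochhammer_sq]
        ring
    _ ≡ qPochhammer X n ^ 2 * (∏ i ∈ range n, (1 + X ^ (i + 1))) ^ 2
        [SMOD Ideal.span {X ^ n}] := SModEq.rfl.mul (qChoose_X_central_mul_triangularGF_smodEq n)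
    _ = qPochhammer (X ^ 2) n ^ 2 := by rw [← mul_pow, qPochhammer_mul_prod_one_add_pow]

/-- Gauss' identity `∑_{n≥0} q^{n(n+1)/2} = ∏_{n≥1}(1-q^{2n})²/(1-q^n)`, stated
coefficientwise after clearing denominators: for each `N`, the `q^N`-coefficient of
`∏_{n≥1}(1-q^n) · Δ(q)` equals that of `∏_{n≥1}(1-q^{2n})²` (the products may be
truncated at `n = N+1` without affecting the `q^N`-coefficient). -/
theorem gauss_triangular_identity (N : ℕ) :
    PowerSeries.coeff N
        ((∏ i ∈ Finset.range (N + 1), (1 - (PowerSeries.X : PowerSeries ℚ) ^ (i + 1)))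
          * triangularGF)
      = PowerSeries.coeff N
        (∏ i ∈ Finset.range (N + 1),
          (1 - (PowerSeries.X : PowerSeries ℚ) ^ (2 * (i + 1))) ^ 2) := by
  have h := smodEq_span_X_pow_iff.mp (qPochhammer_X_mul_triangularGF_smodEq (N + 1)) N
    N.lt_succ_self
  simpa only [qPochhammer, ← prod_pow, ← pow_mul] using h
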